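/- arXiv:2008.02558 — 2 statements merged into one kernel-verified Lean document; each statement's English description precedes it below -/
import Mathlib

section
/- Let p be a prime and let k, m ≥ 1 be integers. Then there exist k distinct primes r_1, …, r_k, each at least p^m, such that for every i with 1 ≤ i ≤ k, the prime r_i does not divide p^{m·r_1⋯r_{i-1}·r_{i+1}⋯r_k} − 1. -/
/-- Key step: for any bound `B`, there are primes `s > max B p` and `r > s` such that
any `N` with `r ∣ p^N - 1` satisfies `s ∣ N` (i.e. the order of `p` mod `r` is `s`). -/
lemma step_aux (p B : ℕ) (hp : 2 ≤ p) :
    ∃ s r : ℕ, s.Prime ∧ r.Prime ∧ B < s ∧ p < s ∧ s < r ∧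
      ∀ N, r ∣ p ^ N - 1 → s ∣ N := by
  obtain ⟨s, hsle, hs⟩ := Nat.exists_infinite_primes (max B p + 1)
  have hB1 : B ≤ max B p := le_max_left _ _
  have hB2 : p ≤ max B p := le_max_right _ _
  have hBs : B < s := by omega
  have hps : p < s := by omega
  set Q := ∑ i ∈ Finset.range s, p ^ i with hQdef
  have hQs : s ≤ Q := by
    calc s = ∑ _i ∈ Finset.range s, 1 := by simp
    _ ≤ Q := Finset.sum_le_sum fun i _ => Nat.one_le_pow _ _ (by omega)
  have hQ1 : 1 < Q := lt_of_lt_of_le hs.one_lt hQs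
  set r := Q.minFac with hrdef
  have hrp : r.Prime := Nat.minFac_prime (by omega)
  haveI := Fact.mk hrp
  have hrQ : r ∣ Q := Nat.minFac_dvd Q
  -- Q divides p^s - 1
  have hQd : Q ∣ p ^ s - 1 := by
    have h1 : (1:ℕ) ≤ p ^ s := Nat.one_le_pow _ _ (by omega)
    have hz : (Q : ℤ) ∣ (p:ℤ) ^ s - 1 := ⟨(p:ℤ) - 1, by push_cast [hQdef]; rw [geom_sum_mul]⟩
    have : (Q : ℤ) ∣ ((p ^ s - 1 : ℕ) : ℤ) := by
      rwa [Nat.cast_sub h1, Nat.cast_pow, Nat.cast_one]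
    exact_mod_cast this
  have hcast : ∀ N, r ∣ p ^ N - 1 → (p : ZMod r) ^ N = 1 := by
    intro N hN
    have h1 : (1:ℕ) ≤ p ^ N := Nat.one_le_pow _ _ (by omega)
    have h0 : ((p ^ N - 1 : ℕ) : ZMod r) = 0 := (ZMod.natCast_eq_zero_iff _ _).mpr hN
    rw [Nat.cast_sub h1, Nat.cast_pow, Nat.cast_one, sub_eq_zero] at h0
    exact h0
  have hpows : (p : ZMod r) ^ s = 1 := hcast s (hrQ.trans hQd)
  -- p is nonzero mod r
  have hp0 : (p : ZMod r) ≠ 0 := by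
    intro h
    have hrp' : r ∣ p := (ZMod.natCast_eq_zero_iff _ _).mp h
    have hQ' : Q = p * ∑ i ∈ Finset.range (s - 1), p ^ i + 1 := by
      rw [hQdef, show s = (s - 1) + 1 by omega, geom_sum_succ, Nat.add_sub_cancel]
    have h2 : r ∣ p * ∑ i ∈ Finset.range (s - 1), p ^ i := hrp'.mul_right _
    have h3 : r ∣ 1 := (Nat.dvd_add_right h2).mp (hQ' ▸ hrQ)
    exact hrp.one_lt.ne' (Nat.dvd_one.mp h3)
  -- the order of p mod r is exactly s
  have hord_dvd : orderOf (p : ZMod r) ∣ s := orderOf_dvd_of_pow_eq_one hpows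
  have hord1 : orderOf (p : ZMod r) ≠ 1 := by
    intro h
    have hp1 : (p : ZMod r) = 1 := orderOf_eq_one_iff.mp h
    have hQ0 : ((Q : ℕ) : ZMod r) = 0 := (ZMod.natCast_eq_zero_iff _ _).mpr hrQ
    have hQr : ((Q : ℕ) : ZMod r) = (s : ZMod r) := by
      rw [hQdef]
      push_cast
      rw [Finset.sum_congr rfl fun i _ => by rw [hp1, one_pow]]
      simp
    have hrs : r ∣ s := (ZMod.natCast_eq_zero_iff _ _).mp (hQr ▸ hQ0)
    have hreq : r = s := (Nat.prime_dvd_prime_iff_eq hrp hs).mp hrs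
    -- then p ≡ 1 mod s with s > p, contradiction
    have hz : ((p - 1 : ℕ) : ZMod r) = 0 := by
      rw [Nat.cast_sub (by omega), hp1, Nat.cast_one, sub_self]
    have hd : r ∣ p - 1 := (ZMod.natCast_eq_zero_iff _ _).mp hz
    rw [hreq] at hd
    have := Nat.le_of_dvd (by omega) hd
    omega
  have hord : orderOf (p : ZMod r) = s :=
    (hs.eq_one_or_self_of_dvd _ hord_dvd).resolve_left hord1
  -- s < r
  have hsr : s < r := by
    have h1 : (p : ZMod r) ^ (r - 1) = 1 := ZMod.pow_card_sub_one_eq_one hp0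
    have h2 : s ∣ r - 1 := hord ▸ orderOf_dvd_of_pow_eq_one h1
    have := Nat.le_of_dvd (by have := hrp.two_le; omega) h2
    omega
  exact ⟨s, r, hs, hrp, hBs, hps, hsr, fun N hN => hord ▸ orderOf_dvd_of_pow_eq_one (hcast N hN)⟩

/-- There exist `k` distinct primes `r i ≥ p^m` such that `r i` does not divide
`p^(m · ∏_{j ≠ i} r j) − 1`. -/
theorem stmt4 (p : ℕ) (hp : p.Prime) (k m : ℕ) (hk : 1 ≤ k) (hm : 1 ≤ m) :
    ∃ r : Fin k → ℕ, Function.Injective r ∧ (∀ i, (r i).Prime ∧ p ^ m ≤ r i) ∧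
      ∀ i, ¬ (r i ∣ p ^ (m * ∏ j ∈ Finset.univ.erase i, r j) - 1) := by
  have hp2 : 2 ≤ p := hp.two_le
  choose S R hS hR hBS hpS hSR hkey using fun B => step_aux p B hp2
  set B₀ := p ^ m + m with hB0
  set g : ℕ → ℕ := fun n => Nat.rec B₀ (fun _ prev => R prev) n with hg
  have hgsucc : ∀ n, g (n+1) = R (g n) := fun n => rfl
  have hglt : ∀ n, g n < g (n+1) := fun n => by
    rw [hgsucc]; exact lt_trans (hBS (g n)) (hSR (g n))
  have hgmono : StrictMono g := strictMono_nat_of_lt_succ hglt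
  have hg0 : g 0 = B₀ := rfl
  have hgB : ∀ n, B₀ ≤ g n := fun n => hg0 ▸ hgmono.monotone (Nat.zero_le n)
  refine ⟨fun i => R (g (i : ℕ)), ?_, ?_, ?_⟩
  · intro i j hij
    have : g ((i : ℕ) + 1) = g ((j : ℕ) + 1) := by
      rw [hgsucc, hgsucc]; exact hij
    have h2 : (i : ℕ) + 1 = (j : ℕ) + 1 := hgmono.injective this
    exact Fin.ext (by omega)
  · intro i
    refine ⟨hR _, ?_⟩
    show p ^ m ≤ R (g (i : ℕ))
    have h1 : g (i : ℕ) < R (g (i : ℕ)) := lt_trans (hBS _) (hSR _)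
    have h2 := hgB (i : ℕ)
    omega
  · intro i hdvd
    have hsd : S (g (i : ℕ)) ∣ m * ∏ j ∈ Finset.univ.erase i, R (g (j : ℕ)) :=
      hkey (g (i : ℕ)) _ hdvd
    have hSp := hS (g (i : ℕ))
    have hSm : m < S (g (i : ℕ)) := by
      have := hgB (i : ℕ); have := hBS (g (i : ℕ)); omega
    rcases (Nat.Prime.dvd_mul hSp).mp hsd with h | h
    · have := Nat.le_of_dvd hm h; omega
    · obtain ⟨j, hj, hdj⟩ := (hSp.prime.dvd_finset_prod_iff _).mp h
      have hji : (j : ℕ) ≠ (i : ℕ) := fun hh => (Finset.mem_erase.mp hj).1 (Fin.ext hh)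
      have heq : S (g (i : ℕ)) = R (g (j : ℕ)) :=
        (Nat.prime_dvd_prime_iff_eq hSp (hR _)).mp hdj
      rcases lt_or_gt_of_ne hji with hlt | hgt
      · -- j < i : R (g j) = g (j+1) ≤ g i < S (g i)
        have h1 : g ((j : ℕ) + 1) ≤ g (i : ℕ) := hgmono.monotone (Nat.succ_le_of_lt hlt)
        have h2 := hBS (g (i : ℕ))
        rw [hgsucc] at h1
        omega
      · -- i < j : S (g i) < R (g i) = g (i+1) ≤ g j < S (g j) < R (g j)
        have h1 : g ((i : ℕ) + 1) ≤ g (j : ℕ) := hgmono.monotone (Nat.succ_le_of_lt hgt)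
        have h2 := hSR (g (i : ℕ))
        have h3 := hBS (g (j : ℕ))
        have h4 := hSR (g (j : ℕ))
        rw [hgsucc] at h1
        omega
end

section
/- Let n = 2m+1 ≥ 5 be odd and let s ∈ S_n be a permutation that is a product of two disjoint cycles of lengths m and m+1. Then s lies in exactly one intransitive maximal subgroup of S_n (the stabiliser of the m-element support of the m-cycle, isomorphic to S_m × S_{m+1}), and s lies in no transitive imprimitive subgroup of S_n. -/
open Finset Equiv

/-- If `s` agrees with `e` on `e.support`, then `s ^ j` agrees with `e ^ j` there. -/
lemma stmt11_aux_pow {α : Type*} [DecidableEq α] [Fintype α]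
    (s e : Equiv.Perm α) (hse : ∀ x ∈ e.support, s x = e x) :
    ∀ (j : ℕ) (x : α), x ∈ e.support → (s ^ j) x = (e ^ j) x := by
  intro j
  induction j with
  | zero => simp
  | succ n ih =>
    intro x hx
    have hx'' : (e ^ n) x ∈ e.support := Equiv.Perm.pow_apply_mem_support.mpr hx
    rw [pow_succ', pow_succ', Equiv.Perm.mul_apply, Equiv.Perm.mul_apply, ih x hx, hse _ hx'']

/-- Transitivity of powers of `s` on `e.support` when `e` is a cycle and `s` agrees with `e`
on `e.support`. -/
lemma stmt11_aux_trans {α : Type*} [DecidableEq α] [Fintype α]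
    (s e : Equiv.Perm α) (hse : ∀ x ∈ e.support, s x = e x) (he : e.IsCycle)
    {x y : α} (hx : x ∈ e.support) (hy : y ∈ e.support) :
    ∃ j : ℕ, (s ^ j) x = y := by
  obtain ⟨i, hi⟩ := he.exists_pow_eq (Equiv.Perm.mem_support.mp hx) (Equiv.Perm.mem_support.mp hy)
  exact ⟨i, by rw [stmt11_aux_pow s e hse i x hx, hi]⟩

/-- For `s ∈ S_{2m+1}` a product of disjoint cycles of lengths `m` and `m+1`:
the only `s`-invariant subsets are `∅`, everything, and the two cycle supports
(so `s` lies in a unique intransitive maximal subgroup, of type `S_m × S_{m+1}`),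
and `s` preserves no nontrivial partition into blocks of equal size
(so `s` lies in no transitive imprimitive subgroup). -/
theorem stmt11 (m : ℕ) (hm : 2 ≤ m) (s c d : Equiv.Perm (Fin (2 * m + 1)))
    (hs : s = c * d) (hc : c.IsCycle) (hd : d.IsCycle)
    (hdisj : c.Disjoint d) (hcs : c.support.card = m) (hds : d.support.card = m + 1) :
    (∀ A : Finset (Fin (2 * m + 1)), (∀ x ∈ A, s x ∈ A) →
       A = ∅ ∨ A = Finset.univ ∨ A = c.support ∨ A = d.support) ∧
    ∀ (P : Finset (Finset (Fin (2 * m + 1)))) (a : ℕ), 1 < a → a < 2 * m + 1 →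
      (∀ B ∈ P, B.card = a) → (∀ x : Fin (2 * m + 1), ∃ B ∈ P, x ∈ B) →
      (∀ B ∈ P, ∀ C ∈ P, B ≠ C → Disjoint B C) →
      ¬ (∀ B ∈ P, B.image s ∈ P) := by
  classical
  have hsuppdisj : Disjoint c.support d.support := hdisj.disjoint_support
  -- s agrees with c on c.support and with d on d.support
  have hsc : ∀ x ∈ c.support, s x = c x := by
    intro x hx
    have hdx : d x = x := by
      rcases hdisj x with h | h
      · exact absurd h (Equiv.Perm.mem_support.mp hx)
      · exact h
    rw [hs, Equiv.Perm.mul_apply, hdx]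
  have hsd : ∀ x ∈ d.support, s x = d x := by
    intro x hx
    have hdx : d x ∈ d.support := Equiv.Perm.apply_mem_support.mpr hx
    have hcx : c (d x) = d x := by
      rcases hdisj (d x) with h | h
      · exact h
      · exact absurd h (Equiv.Perm.mem_support.mp hdx)
    rw [hs, Equiv.Perm.mul_apply, hcx]
  -- supports partition the universe
  have huniv : c.support ∪ d.support = Finset.univ := by
    apply Finset.eq_univ_of_card
    rw [Finset.card_union_of_disjoint hsuppdisj, hcs, hds, Fintype.card_fin]
    ring
  have hmem : ∀ x : Fin (2 * m + 1), x ∈ c.support ∨ x ∈ d.support := by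
    intro x
    have := Finset.mem_univ x
    rw [← huniv, Finset.mem_union] at this
    exact this
  -- s maps each support into itself
  have hmapc : ∀ x ∈ c.support, s x ∈ c.support := fun x hx => by
    rw [hsc x hx]; exact Equiv.Perm.apply_mem_support.mpr hx
  have hmapd : ∀ x ∈ d.support, s x ∈ d.support := fun x hx => by
    rw [hsd x hx]; exact Equiv.Perm.apply_mem_support.mpr hx
  -- powers of s preserve membership in each support (iff version)
  have hiterc : ∀ (j : ℕ) (x), x ∈ c.support → (s ^ j) x ∈ c.support := by
    intro j x hx
    rw [stmt11_aux_pow s c hsc j x hx]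
    exact Equiv.Perm.pow_apply_mem_support.mpr hx
  have hiterd : ∀ (j : ℕ) (x), x ∈ d.support → (s ^ j) x ∈ d.support := by
    intro j x hx
    rw [stmt11_aux_pow s d hsd j x hx]
    exact Equiv.Perm.pow_apply_mem_support.mpr hx
  have hiffc : ∀ (j : ℕ) (x), (s ^ j) x ∈ c.support ↔ x ∈ c.support := by
    intro j x
    constructor
    · intro h
      rcases hmem x with hx | hx
      · exact hx
      · exact absurd h (Finset.disjoint_right.mp hsuppdisj (hiterd j x hx))
    · exact hiterc j x
  have hiffd : ∀ (j : ℕ) (x), (s ^ j) x ∈ d.support ↔ x ∈ d.support := by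
    intro j x
    constructor
    · intro h
      rcases hmem x with hx | hx
      · exact absurd h (Finset.disjoint_left.mp hsuppdisj (hiterc j x hx))
      · exact hx
    · exact hiterd j x
  constructor
  · -- Part 1: invariant subsets
    intro A hA
    have hApow : ∀ (j : ℕ), ∀ x ∈ A, (s ^ j) x ∈ A := by
      intro j
      induction j with
      | zero => intro x hx; simpa using hx
      | succ n ih =>
        intro x hx
        rw [pow_succ, Equiv.Perm.mul_apply]
        exact ih (s x) (hA x hx)
    have key : ∀ (e : Equiv.Perm (Fin (2 * m + 1))), e.IsCycle →
        (∀ x ∈ e.support, s x = e x) → (A ∩ e.support).Nonempty → e.support ⊆ A := by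
      intro e he hse ⟨y, hy⟩
      rw [Finset.mem_inter] at hy
      intro x hx
      obtain ⟨j, hj⟩ := stmt11_aux_trans s e hse he hy.2 hx
      rw [← hj]
      exact hApow j y hy.1
    by_cases h1 : (A ∩ c.support).Nonempty
    · by_cases h2 : (A ∩ d.support).Nonempty
      · right; left
        apply Finset.eq_univ_of_forall
        intro x
        rcases hmem x with hx | hx
        · exact key c hc hsc h1 hx
        · exact key d hd hsd h2 hx
      · right; right; left
        apply Finset.Subset.antisymm
        · intro x hx
          rcases hmem x with hx' | hx'
          · exact hx'
          · exact absurd (Finset.mem_inter.mpr ⟨hx, hx'⟩) (by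
              rw [Finset.not_nonempty_iff_eq_empty] at h2
              rw [h2]; exact Finset.notMem_empty x)
        · exact key c hc hsc h1
    · by_cases h2 : (A ∩ d.support).Nonempty
      · right; right; right
        apply Finset.Subset.antisymm
        · intro x hx
          rcases hmem x with hx' | hx'
          · exact absurd (Finset.mem_inter.mpr ⟨hx, hx'⟩) (by
              rw [Finset.not_nonempty_iff_eq_empty] at h1
              rw [h1]; exact Finset.notMem_empty x)
          · exact hx'
        · exact key d hd hsd h2
      · left
        rw [Finset.not_nonempty_iff_eq_empty] at h1 h2
        apply Finset.eq_empty_of_forall_notMem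
        intro x hx
        rcases hmem x with hx' | hx'
        · exact absurd (Finset.mem_inter.mpr ⟨hx, hx'⟩) (by rw [h1]; exact Finset.notMem_empty x)
        · exact absurd (Finset.mem_inter.mpr ⟨hx, hx'⟩) (by rw [h2]; exact Finset.notMem_empty x)
  · -- Part 2: no block system
    intro P a ha1 ha2 hcard hcover hdisjP himg
    -- images under powers of s stay in P
    have himgpow : ∀ (j : ℕ), ∀ B ∈ P, B.image ⇑(s ^ j) ∈ P := by
      intro j
      induction j with
      | zero => intro B hB; simpa using hB
      | succ n ih =>
        intro B hB
        have : B.image ⇑(s ^ (n + 1)) = (B.image ⇑(s ^ n)).image ⇑s := by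
          rw [Finset.image_image]
          apply Finset.image_congr
          intro x _
          simp only [Function.comp_apply]
          rw [← Equiv.Perm.mul_apply, ← pow_succ']
        rw [this]
        exact himg _ (ih B hB)
    by_cases hcase : ∀ B ∈ P, B ⊆ c.support ∨ B ⊆ d.support
    · -- every block inside one support: a divides both m and m+1
      have hdiv : ∀ (e : Equiv.Perm (Fin (2 * m + 1))), (∀ B ∈ P,
          B ⊆ e.support ∨ Disjoint B e.support) → a ∣ e.support.card := by
        intro e hP
        set Pe := P.filter (fun B => B ⊆ e.support) with hPe
        have hunion : e.support = Pe.biUnion (fun B => B) := by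
          apply Finset.Subset.antisymm
          · intro x hx
            obtain ⟨B, hB, hxB⟩ := hcover x
            rcases hP B hB with h | h
            · exact Finset.mem_biUnion.mpr ⟨B, Finset.mem_filter.mpr ⟨hB, h⟩, hxB⟩
            · exact absurd hx (Finset.disjoint_left.mp h hxB)
          · intro x hx
            obtain ⟨B, hB, hxB⟩ := Finset.mem_biUnion.mp hx
            exact (Finset.mem_filter.mp hB).2 hxB
        have hcardU : e.support.card = Pe.card * a := by
          rw [hunion, Finset.card_biUnion (fun B hB C hC hBC =>
            hdisjP B (Finset.mem_filter.mp hB).1 C (Finset.mem_filter.mp hC).1 hBC)]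
          rw [Finset.sum_congr rfl (fun B hB => hcard B (Finset.mem_filter.mp hB).1),
            Finset.sum_const, smul_eq_mul]
        exact ⟨Pe.card, by rw [hcardU]; ring⟩
      have hdm : a ∣ m := by
        rw [← hcs]
        apply hdiv c
        intro B hB
        rcases hcase B hB with h | h
        · exact Or.inl h
        · exact Or.inr (Finset.disjoint_of_subset_left h hsuppdisj.symm)
      have hdm1 : a ∣ m + 1 := by
        rw [← hds]
        apply hdiv d
        intro B hB
        rcases hcase B hB with h | h
        · exact Or.inr (Finset.disjoint_of_subset_left h hsuppdisj)
        · exact Or.inl h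
      have h1 : a ∣ 1 := by simpa using Nat.dvd_sub hdm1 hdm
      have := Nat.dvd_one.mp h1
      omega
    · -- some block meets both supports
      push_neg at hcase
      obtain ⟨C, hCP, hC1, hC2⟩ := hcase
      -- C meets both supports
      obtain ⟨y, hyC, hyns⟩ := Finset.not_subset.mp hC1
      obtain ⟨z, hzC, hzns⟩ := Finset.not_subset.mp hC2
      have hyd : y ∈ d.support := (hmem y).resolve_left hyns
      have hzc : z ∈ c.support := (hmem z).resolve_right hzns
      set N := orderOf s with hN
      have hNpos : 0 < N := orderOf_pos s
      set O : Finset (Finset (Fin (2 * m + 1))) :=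
        (Finset.range N).image (fun j => C.image ⇑(s ^ j)) with hO
      have hOP : ∀ B ∈ O, B ∈ P := by
        intro B hB
        obtain ⟨j, _, rfl⟩ := Finset.mem_image.mp hB
        exact himgpow j C hCP
      -- the pieces B ∩ e.support partition e.support, each with equal card
      have hpiece : ∀ (e : Equiv.Perm (Fin (2 * m + 1))),
          (∀ (j : ℕ) (x : Fin (2 * m + 1)), (s ^ j) x ∈ e.support ↔ x ∈ e.support) →
          ∀ j : ℕ, (C.image ⇑(s ^ j)) ∩ e.support = (C ∩ e.support).image ⇑(s ^ j) := by
        intro e hiff j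
        ext x
        simp only [Finset.mem_inter, Finset.mem_image]
        constructor
        · rintro ⟨⟨w, hwC, rfl⟩, hwe⟩
          exact ⟨w, ⟨hwC, (hiff j w).mp hwe⟩, rfl⟩
        · rintro ⟨w, ⟨hwC, hwe⟩, rfl⟩
          exact ⟨⟨w, hwC, rfl⟩, (hiff j w).mpr hwe⟩
      have hcover' : ∀ (e : Equiv.Perm (Fin (2 * m + 1))), e.IsCycle →
          (∀ x ∈ e.support, s x = e x) →
          (∀ (j : ℕ) (x : Fin (2 * m + 1)), (s ^ j) x ∈ e.support ↔ x ∈ e.support) →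
          ∀ w ∈ C, w ∈ e.support →
          e.support = O.biUnion (fun B => B ∩ e.support) := by
        intro e he hse hiff w hwC hwe
        apply Finset.Subset.antisymm
        · intro x hx
          obtain ⟨i, hi⟩ := stmt11_aux_trans s e hse he hwe hx
          have hmod : (s ^ (i % N)) w = x := by rw [hN, pow_mod_orderOf, hi]
          apply Finset.mem_biUnion.mpr
          refine ⟨C.image ⇑(s ^ (i % N)), Finset.mem_image.mpr
            ⟨i % N, Finset.mem_range.mpr (Nat.mod_lt _ hNpos), rfl⟩,
            Finset.mem_inter.mpr ⟨Finset.mem_image.mpr ⟨w, hwC, hmod⟩, hx⟩⟩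
        · intro x hx
          exact (Finset.mem_inter.mp (Finset.mem_biUnion.mp hx).choose_spec.2).2
      have hcardeq : ∀ (e : Equiv.Perm (Fin (2 * m + 1))),
          (∀ (j : ℕ) (x : Fin (2 * m + 1)), (s ^ j) x ∈ e.support ↔ x ∈ e.support) →
          ∀ B ∈ O, (B ∩ e.support).card = (C ∩ e.support).card := by
        intro e hiff B hB
        obtain ⟨j, _, rfl⟩ := Finset.mem_image.mp hB
        rw [hpiece e hiff j, Finset.card_image_of_injective _ (s ^ j).injective]
      have hsum : ∀ (e : Equiv.Perm (Fin (2 * m + 1))), e.IsCycle →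
          (∀ x ∈ e.support, s x = e x) →
          (∀ (j : ℕ) (x : Fin (2 * m + 1)), (s ^ j) x ∈ e.support ↔ x ∈ e.support) →
          ∀ w ∈ C, w ∈ e.support →
          e.support.card = O.card * (C ∩ e.support).card := by
        intro e he hse hiff w hwC hwe
        calc e.support.card = (O.biUnion fun B => B ∩ e.support).card := by
              rw [← hcover' e he hse hiff w hwC hwe]
          _ = ∑ B ∈ O, (B ∩ e.support).card := Finset.card_biUnion (fun B hB B' hB' hne =>
              Finset.disjoint_of_subset_left Finset.inter_subset_left
                (Finset.disjoint_of_subset_right Finset.inter_subset_left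
                  (hdisjP B (hOP B hB) B' (hOP B' hB') hne)))
          _ = ∑ _B ∈ O, (C ∩ e.support).card := Finset.sum_congr rfl (hcardeq e hiff)
          _ = O.card * (C ∩ e.support).card := by rw [Finset.sum_const, smul_eq_mul]
      have hsumc : m = O.card * (C ∩ c.support).card := by
        conv_lhs => rw [← hcs]
        exact hsum c hc hsc hiffc z hzC hzc
      have hsumd : m + 1 = O.card * (C ∩ d.support).card := by
        conv_lhs => rw [← hds]
        exact hsum d hd hsd hiffd y hyC hyd
      have hOdvd1 : O.card ∣ 1 := by
        have h1 : O.card ∣ m := ⟨_, hsumc⟩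
        have h2 : O.card ∣ m + 1 := ⟨_, hsumd⟩
        simpa using Nat.dvd_sub h2 h1
      have hO1 : O.card = 1 := Nat.dvd_one.mp hOdvd1
      rw [hO1, one_mul] at hsumc hsumd
      -- then C contains both supports, so card C ≥ 2m+1
      have hsub : (C ∩ c.support) ∪ (C ∩ d.support) ⊆ C :=
        Finset.union_subset Finset.inter_subset_left Finset.inter_subset_left
      have hdisj' : Disjoint (C ∩ c.support) (C ∩ d.support) :=
        Finset.disjoint_of_subset_left Finset.inter_subset_right
          (Finset.disjoint_of_subset_right Finset.inter_subset_right hsuppdisj)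
      have hle : (2 * m + 1) ≤ C.card := by
        calc 2 * m + 1 = (C ∩ c.support).card + (C ∩ d.support).card := by omega
        _ = ((C ∩ c.support) ∪ (C ∩ d.support)).card :=
          (Finset.card_union_of_disjoint hdisj').symm
        _ ≤ C.card := Finset.card_le_card hsub
      rw [hcard C hCP] at hle
      omega
end
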